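/- Let G be a locally compact Hausdorff group with left Haar measure λ_G and modular function Δ_G, and N a compact normal subgroup with Haar measure λ_N satisfying ∫_N v(x s x⁻¹) dλ_N(s) = ∫_N v dλ_N for all v ∈ C_c(N) and x ∈ G, with Δ_G restricted to N equal to the modular function Δ_N of N, and with the inversion formula ∫_N v(s⁻¹) Δ_N(s⁻¹) dλ_N(s) = ∫_N v dλ_N. Then for every G-invariant character ξ : N → 𝕋 and every continuous compactly supported f : G → ℂ, T_ξ(f^{∗G}) = (T_ξ(f))^{∗G}. -/

import Mathlib

/-!
Compactness of `N` forces `Δ_N ≡ 1` (test the modular relation against the constant `1`), hence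
`Δ_G ≡ 1` on `N`; since `Δ_G` is multiplicative, the integrand of `T_ξ(f^*)(x)` becomes
`Δ_G(x⁻¹) v(s⁻¹)` with `v(s) = conj f(s x⁻¹) ξ(s)`. Unimodularity of `N` removes the inversion, and
the substitution `s ↦ x⁻¹ s x`, under which both `λ_N` and `ξ` are invariant, turns `v` into
`conj f(x⁻¹ s) ξ(s)`, the conjugate of the integrand of `T_ξ f(x⁻¹)`.
-/

open MeasureTheory ComplexConjugate

theorem eq_one_of_integral_mul_right_eq {H : Type*} [Mul H] [TopologicalSpace H]
    [CompactSpace H] [MeasurableSpace H] (μ : Measure H) [IsFiniteMeasure μ] [NeZero μ]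
    {Δ : H → ℝ}
    (hΔ : ∀ (v : H → ℂ), Continuous v → HasCompactSupport v → ∀ t : H,
      ∫ s, v (s * t) ∂μ = ((Δ t)⁻¹ : ℂ) * ∫ s, v s ∂μ) (t : H) :
    Δ t = 1 := by
  have h := hΔ (fun _ => 1) continuous_const (.of_compactSpace _) t
  have hμ : (μ.real Set.univ : ℂ) ≠ 0 := by
    exact_mod_cast (measureReal_univ_pos (μ := μ)).ne'
  simp only [integral_const, Complex.real_smul, mul_one] at h
  have hΔ_inv : ((Δ t : ℂ))⁻¹ = 1 := by
    simpa [hμ] using h.symm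
  exact_mod_cast inv_eq_one.mp hΔ_inv

section

variable {G : Type*} [Group G] [TopologicalSpace G] [IsTopologicalGroup G]
  [LocallyCompactSpace G] [MeasurableSpace G] [BorelSpace G]

theorem exists_continuous_hasCompactSupport_integral_ne_zero (μ : Measure G) [μ.IsHaarMeasure] :
    ∃ g : G → ℂ, Continuous g ∧ HasCompactSupport g ∧ ∫ x, g x ∂μ ≠ 0 := by
  obtain ⟨⟨g, hg⟩, hgc, hg0, hg1⟩ : ∃ g : C(G, ℝ), HasCompactSupport g ∧ 0 ≤ g ∧ g 1 ≠ 0 :=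
    exists_continuous_nonneg_pos 1
  refine ⟨fun x => (g x : ℂ), by fun_prop, hgc.comp_left Complex.ofReal_zero, ?_⟩
  rw [integral_complex_ofReal, Complex.ofReal_ne_zero]
  exact (hg.integral_pos_of_hasCompactSupport_nonneg_nonzero hgc hg0 hg1).ne'

theorem map_mul_of_integral_mul_right_eq (μ : Measure G) [μ.IsHaarMeasure] {Δ : G → ℝ}
    (hΔ : ∀ (f : G → ℂ), Continuous f → HasCompactSupport f → ∀ t : G,
      ∫ x, f (x * t) ∂μ = ((Δ t)⁻¹ : ℂ) * ∫ x, f x ∂μ) (a b : G) :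
    Δ (a * b) = Δ a * Δ b := by
  obtain ⟨g, hg, hgc, hI⟩ := exists_continuous_hasCompactSupport_integral_ne_zero μ
  have hgb : HasCompactSupport fun x => g (x * b) := hgc.comp_homeomorph (Homeomorph.mulRight b)
  have key : ((Δ (a * b) : ℂ))⁻¹ * ∫ x, g x ∂μ = ((Δ a : ℂ))⁻¹ * (Δ b : ℂ)⁻¹ * ∫ x, g x ∂μ :=
    calc ((Δ (a * b) : ℂ))⁻¹ * ∫ x, g x ∂μ = ∫ x, g (x * a * b) ∂μ := by
          simp only [mul_assoc, hΔ g hg hgc]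
      _ = ((Δ a : ℂ))⁻¹ * (Δ b : ℂ)⁻¹ * ∫ x, g x ∂μ := by
          rw [hΔ (fun x => g (x * b)) (by fun_prop) hgb, hΔ g hg hgc, mul_assoc]
  have hinv := mul_right_cancel₀ hI key
  rw [← mul_inv, inv_inj] at hinv
  exact_mod_cast hinv

end

theorem integral_comp_mul_right_mul_character_eq_comp_mul_left {G : Type*} [Group G]
    [TopologicalSpace G] [ContinuousMul G] {N : Subgroup G} (hN : N.Normal) [CompactSpace N]
    [MeasurableSpace N] (μ : Measure N)
    (hσ : ∀ (x : G) (v : ↥N → ℂ), Continuous v → HasCompactSupport v →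
      ∫ s : ↥N, v ⟨x * (s : G) * x⁻¹, hN.conj_mem (s : G) s.2 x⟩ ∂μ = ∫ s : ↥N, v s ∂μ)
    (ξ : N →* Circle) (hξ : Continuous fun s : ↥N => ξ s)
    (hinv : ∀ (x s : G) (hs : s ∈ N) (hs' : x⁻¹ * s * x ∈ N),
      ξ ⟨x⁻¹ * s * x, hs'⟩ = ξ ⟨s, hs⟩)
    {φ : G → ℂ} (hφ : Continuous φ) (y : G) :
    ∫ s : N, φ (s * y) * ξ s ∂μ = ∫ s : N, φ (y * s) * ξ s ∂μ := by
  rw [← hσ y (fun s => φ (s * y) * ξ s) (by fun_prop) (.of_compactSpace _)]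
  congr 1 with s
  have hs : y⁻¹⁻¹ * s * y⁻¹ ∈ N := by simpa using hN.conj_mem _ s.2 y
  rw [← hinv y⁻¹ s s.2 hs]
  simp

theorem Txi_involution_compact_general
    {G : Type*} [Group G] [TopologicalSpace G] [IsTopologicalGroup G]
    [LocallyCompactSpace G] [MeasurableSpace G] [BorelSpace G]
    (lamG : Measure G) [lamG.IsHaarMeasure]
    (N : Subgroup G) (hNrm : N.Normal) (hNcpt : IsCompact (N : Set G))
    (lamN : Measure ↥N) [lamN.IsHaarMeasure]
    (ΔG : G → ℝ)
    (hΔG : ∀ (f : G → ℂ), Continuous f → HasCompactSupport f → ∀ t : G,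
      ∫ x, f (x * t) ∂lamG = ((ΔG t)⁻¹ : ℂ) * ∫ x, f x ∂lamG)
    (ΔN : ↥N → ℝ)
    (hΔN : ∀ (v : ↥N → ℂ), Continuous v → HasCompactSupport v → ∀ t : ↥N,
      ∫ s, v (s * t) ∂lamN = ((ΔN t)⁻¹ : ℂ) * ∫ s, v s ∂lamN)
    (hrestr : ∀ s : ↥N, ΔG (s : G) = ΔN s)
    (hσ1 : ∀ (x : G) (v : ↥N → ℂ), Continuous v → HasCompactSupport v →
      ∫ s : ↥N, v ⟨x * (s : G) * x⁻¹, hNrm.conj_mem (s : G) s.2 x⟩ ∂lamN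
        = ∫ s : ↥N, v s ∂lamN)
    (hinvN : ∀ (v : ↥N → ℂ), Continuous v → HasCompactSupport v →
      ∫ s : ↥N, v s⁻¹ * ((ΔN s⁻¹ : ℝ) : ℂ) ∂lamN = ∫ s : ↥N, v s ∂lamN)
    (ξ : N →* Circle) (hξcont : Continuous fun s : ↥N => ξ s)
    (hinv : ∀ (x s : G) (hs : s ∈ N) (hs' : x⁻¹ * s * x ∈ N),
      ξ ⟨x⁻¹ * s * x, hs'⟩ = ξ ⟨s, hs⟩)
    (f : G → ℂ) (hf : Continuous f) :
    ∀ x : G,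
      ∫ s : ↥N, ((ΔG ((x * (s : G))⁻¹) : ℝ) : ℂ) * starRingEnd ℂ (f ((x * (s : G))⁻¹))
          * starRingEnd ℂ (ξ s) ∂lamN
        = ((ΔG x⁻¹ : ℝ) : ℂ)
          * starRingEnd ℂ (∫ s : ↥N, f (x⁻¹ * (s : G)) * starRingEnd ℂ (ξ s) ∂lamN) := by
  intro x
  have : CompactSpace N := isCompact_iff_compactSpace.mp hNcpt
  have hΔN1 := eq_one_of_integral_mul_right_eq lamN hΔN
  have hΔG_inv_mul (s : N) : ΔG ((x * (s : G))⁻¹) = ΔG x⁻¹ := by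
    rw [mul_inv_rev, map_mul_of_integral_mul_right_eq lamG hΔG, ← Subgroup.coe_inv, hrestr,
      hΔN1, one_mul]
  have hv : Continuous fun s : N => conj (f (s * x⁻¹)) * ξ s := by fun_prop
  calc _ = ∫ s : N, (ΔG x⁻¹ : ℂ) * (conj (f (↑s⁻¹ * x⁻¹)) * ξ s⁻¹) ∂lamN := by
        congr 1 with s
        rw [hΔG_inv_mul, map_inv, Circle.coe_inv_eq_conj, Subgroup.coe_inv, mul_inv_rev, mul_assoc]
    _ = (ΔG x⁻¹ : ℂ) * ∫ s : N, conj (f (s * x⁻¹)) * ξ s ∂lamN := by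
        rw [integral_const_mul, ← hinvN _ hv (.of_compactSpace _)]
        simp [hΔN1]
    _ = (ΔG x⁻¹ : ℂ) * ∫ s : N, conj (f (x⁻¹ * s)) * ξ s ∂lamN := by
        congr 1
        exact integral_comp_mul_right_mul_character_eq_comp_mul_left hNrm lamN hσ1 ξ hξcont hinv
          (φ := fun y => conj (f y)) (by fun_prop) x⁻¹
    _ = _ := by
        rw [← integral_conj]
        simp

/-- If `N` is a compact normal subgroup (so `σ_N ≡ 1`), then
`T_ξ (f^{∗G}) = (T_ξ f)^{∗G}` for every `G`-invariant character `ξ` and `f ∈ C_c(G)`. -/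
theorem Txi_involution_compact
    {G : Type*} [Group G] [TopologicalSpace G] [IsTopologicalGroup G]
    [LocallyCompactSpace G] [T2Space G] [MeasurableSpace G] [BorelSpace G]
    (lamG : Measure G) [lamG.IsHaarMeasure]
    (N : Subgroup G) (hNrm : N.Normal) (hNcpt : IsCompact (N : Set G))
    (lamN : Measure ↥N) [lamN.IsHaarMeasure]
    (ΔG : G → ℝ) (hΔGpos : ∀ x, 0 < ΔG x)
    (hΔG : ∀ (f : G → ℂ), Continuous f → HasCompactSupport f → ∀ t : G,
      ∫ x, f (x * t) ∂lamG = ((ΔG t)⁻¹ : ℂ) * ∫ x, f x ∂lamG)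
    (ΔN : ↥N → ℝ) (hΔNpos : ∀ s, 0 < ΔN s)
    (hΔN : ∀ (v : ↥N → ℂ), Continuous v → HasCompactSupport v → ∀ t : ↥N,
      ∫ s, v (s * t) ∂lamN = ((ΔN t)⁻¹ : ℂ) * ∫ s, v s ∂lamN)
    (hrestr : ∀ s : ↥N, ΔG (s : G) = ΔN s)
    (hσ1 : ∀ (x : G) (v : ↥N → ℂ), Continuous v → HasCompactSupport v →
      ∫ s : ↥N, v ⟨x * (s : G) * x⁻¹, hNrm.conj_mem (s : G) s.2 x⟩ ∂lamN
        = ∫ s : ↥N, v s ∂lamN)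
    (hinvN : ∀ (v : ↥N → ℂ), Continuous v → HasCompactSupport v →
      ∫ s : ↥N, v s⁻¹ * ((ΔN s⁻¹ : ℝ) : ℂ) ∂lamN = ∫ s : ↥N, v s ∂lamN)
    (ξ : N →* Circle) (hξcont : Continuous fun s : ↥N => ξ s)
    (hinv : ∀ (x s : G) (hs : s ∈ N) (hs' : x⁻¹ * s * x ∈ N),
      ξ ⟨x⁻¹ * s * x, hs'⟩ = ξ ⟨s, hs⟩)
    (f : G → ℂ) (hf : Continuous f) (hfc : HasCompactSupport f) :
    ∀ x : G,
      ∫ s : ↥N, ((ΔG ((x * (s : G))⁻¹) : ℝ) : ℂ) * starRingEnd ℂ (f ((x * (s : G))⁻¹))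
          * starRingEnd ℂ (ξ s) ∂lamN
        = ((ΔG x⁻¹ : ℝ) : ℂ)
          * starRingEnd ℂ (∫ s : ↥N, f (x⁻¹ * (s : G)) * starRingEnd ℂ (ξ s) ∂lamN) :=
  Txi_involution_compact_general lamG N hNrm hNcpt lamN ΔG hΔG ΔN hΔN hrestr hσ1 hinvN ξ hξcont hinv
    f hf
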